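/- Let n ≥ 0, let η be the Lorentzian bilinear form on ℝ^{n+2} described in the context, let 𝔤 ⊆ so(1,n+1)_{ℝU} be a Lie subalgebra, and let R ∈ 𝓡(𝔤). Then R(x, y)U = 0 for all x, y ∈ U^⊥ = span{U, X_1, …, X_n}. -/

import Mathlib

def mid (n : ℕ) (i : Fin n) : Fin (n + 2) := ⟨(i : ℕ) + 1, by omega⟩

def lastIdx (n : ℕ) : Fin (n + 2) := ⟨n + 1, by omega⟩

/-- The Lorentzian bilinear form on `ℝ^{n+2}` with Gram matrix `[[0,0,1],[0,E_n,0],[1,0,0]]`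
in the basis `U = e_0, X_1 = e_1, …, X_n = e_n, V = e_{n+1}`. -/
def eta (n : ℕ) (x y : Fin (n + 2) → ℝ) : ℝ :=
  x 0 * y (lastIdx n) + x (lastIdx n) * y 0 + ∑ i : Fin n, x (mid n i) * y (mid n i)


/-- The vector `U = e_0`. -/
def Uvec (n : ℕ) : Fin (n + 2) → ℝ := Pi.single 0 1

/-- The vector `V = e_{n+1}`. -/
def Vvec (n : ℕ) : Fin (n + 2) → ℝ := Pi.single (lastIdx n) 1

/-- The set of basis vectors `X_1 = e_1, …, X_n = e_n`. -/
def Xset (n : ℕ) : Set (Fin (n + 2) → ℝ) := Set.range fun i : Fin n => Pi.single (mid n i) 1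

attribute [local instance 100] LieRing.ofAssociativeRing

lemma lastIdx_ne_zero (n : ℕ) : lastIdx n ≠ 0 := by
  simp [lastIdx, Fin.ext_iff]

lemma mid_ne_zero (n : ℕ) (i : Fin n) : mid n i ≠ 0 := by
  simp [mid, Fin.ext_iff]

lemma mid_ne_last (n : ℕ) (i : Fin n) : mid n i ≠ lastIdx n := by
  simp [mid, lastIdx, Fin.ext_iff]
  omega

lemma eta_U_left (n : ℕ) (y : Fin (n+2) → ℝ) : eta n (Uvec n) y = y (lastIdx n) := by
  simp [eta, Uvec, Pi.single_eq_same,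
    Pi.single_eq_of_ne (lastIdx_ne_zero n), Pi.single_eq_of_ne (mid_ne_zero n _)]

lemma eta_symm (n : ℕ) (x y : Fin (n+2) → ℝ) : eta n x y = eta n y x := by
  unfold eta
  rw [Finset.sum_congr rfl (fun i _ => mul_comm (x (mid n i)) (y (mid n i)))]
  ring

lemma eta_smul_left (n : ℕ) (c : ℝ) (x y : Fin (n+2) → ℝ) :
    eta n (c • x) y = c * eta n x y := by
  simp [eta, Finset.mul_sum, mul_add]
  ring

lemma eta_add_left (n : ℕ) (x x' y : Fin (n+2) → ℝ) :
    eta n (x + x') y = eta n x y + eta n x' y := by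
  simp [eta, add_mul, Finset.sum_add_distrib]
  ring

lemma eta_zero_left (n : ℕ) (y : Fin (n+2) → ℝ) : eta n 0 y = 0 := by
  simp [eta]

lemma pairsym {V : Type*} (f : V → V → V → V → ℝ)
    (h1 : ∀ a b c d, f a b c d = -f b a c d)
    (h2 : ∀ a b c d, f a b c d = -f a b d c)
    (h3 : ∀ a b c d, f a b c d + f b c a d + f c a b d = 0) :
    ∀ a b c d, f a b c d = f c d a b := by
  intro a b c d
  linarith [h3 a b c d, h3 b c d a, h3 c d a b, h3 d a b c,
    h1 b c a d, h1 c a b d, h1 c d b a, h1 d b c a, h1 d a c b, h1 a c d b,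
    h1 a b d c, h1 b d a c,
    h2 b c a d, h2 c a b d, h2 b c d a, h2 c d b a, h2 d b c a,
    h2 d a c b, h2 a c d b, h2 d a b c, h2 a b d c, h2 b d a c,
    h2 a b c d, h2 c d a b, h2 c b a d, h2 a c b d, h2 c b d a, h2 d c b a,
    h2 b d c a, h2 a d c b, h2 c a d b, h2 a d b c, h2 b a d c, h2 d b a c,
    h1 c b d a, h1 a c b d, h1 d c a b, h1 b a c d]

/-- a curvature tensor `R ∈ 𝓡(𝔤)` for `𝔤 ⊆ so(1,n+1)_{ℝU}` satisfies
`R(x,y)U = 0` for all `x, y ∈ U^⊥ = span{U, X_1, …, X_n}`. -/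
theorem statement12 (n : ℕ)
    (𝔤 : LieSubalgebra ℝ (Module.End ℝ (Fin (n + 2) → ℝ)))
    (h𝔤 : ∀ M ∈ 𝔤, (∀ x y, eta n (M x) y + eta n x (M y) = 0) ∧
      (∀ v ∈ Submodule.span ℝ {Uvec n}, M v ∈ Submodule.span ℝ {Uvec n}))
    (R : (Fin (n + 2) → ℝ) →ₗ[ℝ] (Fin (n + 2) → ℝ) →ₗ[ℝ] Module.End ℝ (Fin (n + 2) → ℝ))
    (hRval : ∀ u v, R u v ∈ 𝔤)
    (hRanti : ∀ u v, R u v = -R v u)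
    (hRBianchi : ∀ u v w, R u v w + R v w u + R w u v = 0) :
    ∀ x ∈ Submodule.span ℝ (insert (Uvec n) (Xset n)),
      ∀ y ∈ Submodule.span ℝ (insert (Uvec n) (Xset n)),
        R x y (Uvec n) = 0 := by
  -- `R a b` always maps `U` to a multiple of `U`
  have hRU : ∀ a b : Fin (n+2) → ℝ, ∃ c : ℝ, R a b (Uvec n) = c • Uvec n := by
    intro a b
    have h := (h𝔤 _ (hRval a b)).2 (Uvec n) (Submodule.mem_span_singleton_self _)
    obtain ⟨c, hc⟩ := Submodule.mem_span_singleton.mp h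
    exact ⟨c, hc.symm⟩
  -- the quadrilinear form
  set f : (Fin (n+2) → ℝ) → (Fin (n+2) → ℝ) → (Fin (n+2) → ℝ) → (Fin (n+2) → ℝ) → ℝ :=
    fun a b c d => eta n (R a b c) d with hf
  have h1 : ∀ a b c d, f a b c d = -f b a c d := by
    intro a b c d
    have : R a b c = -(R b a c) := by rw [hRanti a b]; rfl
    simp only [hf, this]
    rw [show -(R b a c) = (-1 : ℝ) • (R b a c) by module, eta_smul_left]
    ring
  have h2 : ∀ a b c d, f a b c d = -f a b d c := by
    intro a b c d
    have hs := (h𝔤 _ (hRval a b)).1 c d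
    have := eta_symm n c (R a b d)
    simp only [hf]
    linarith
  have h3 : ∀ a b c d, f a b c d + f b c a d + f c a b d = 0 := by
    intro a b c d
    have hb := hRBianchi a b c
    have : eta n (R a b c + R b c a + R c a b) d = 0 := by
      rw [hb]; exact eta_zero_left n d
    rw [eta_add_left, eta_add_left] at this
    simpa [hf] using this
  have hps := pairsym f h1 h2 h3
  -- the key computation
  have key : ∀ x y : Fin (n+2) → ℝ, x (lastIdx n) = 0 → y (lastIdx n) = 0 →
      R x y (Uvec n) = 0 := by
    intro x y hx hy
    obtain ⟨c, hc⟩ := hRU x y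
    obtain ⟨c1, hc1⟩ := hRU x (Vvec n)
    obtain ⟨c2, hc2⟩ := hRU y (Vvec n)
    have hUV : eta n (Uvec n) (Vvec n) = 1 := by
      rw [eta_U_left]; simp [Vvec]
    have hUx : eta n (Uvec n) x = 0 := by rw [eta_U_left]; exact hx
    have hUy : eta n (Uvec n) y = 0 := by rw [eta_U_left]; exact hy
    -- f y U x V = f x V y U = -f x V U y = -eta (c1 • U) y = -c1 * eta U y = 0
    have t1 : f y (Uvec n) x (Vvec n) = 0 := by
      rw [hps y (Uvec n) x (Vvec n), h2 x (Vvec n) y (Uvec n)]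
      simp only [hf]
      rw [hc1, eta_smul_left, hUy]
      ring
    have t2 : f (Uvec n) x y (Vvec n) = 0 := by
      rw [hps (Uvec n) x y (Vvec n)]
      simp only [hf]
      rw [hc2, eta_smul_left, hUx]
      ring
    have hc0 : c = 0 := by
      have hB := h3 x y (Uvec n) (Vvec n)
      have : f x y (Uvec n) (Vvec n) = c := by
        simp only [hf]
        rw [hc, eta_smul_left, hUV]
        ring
      linarith
    rw [hc, hc0, zero_smul]
  -- elements of the span have vanishing last coordinate
  have hspan : ∀ v ∈ Submodule.span ℝ (insert (Uvec n) (Xset n)), v (lastIdx n) = 0 := by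
    intro v hv
    have hle : Submodule.span ℝ (insert (Uvec n) (Xset n)) ≤
        LinearMap.ker (LinearMap.proj (lastIdx n) :
          (Fin (n+2) → ℝ) →ₗ[ℝ] ℝ) := by
      rw [Submodule.span_le]
      rintro w (rfl | ⟨i, rfl⟩)
      · simp [LinearMap.mem_ker, Uvec,
          Pi.single_eq_of_ne (lastIdx_ne_zero n)]
      · simp [LinearMap.mem_ker,
          Pi.single_eq_of_ne (Ne.symm (mid_ne_last n i))]
    simpa using hle hv
  intro x hx y hy
  exact key x y (hspan x hx) (hspan y hy)
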